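/- Let A be a Banach algebra with a left approximate identity and φ a non-zero multiplicative linear functional on A. Then the bidual A** (with the first Arens product) is left φ̃-biflat if and only if A is left φ-biflat. -/

import Mathlib

/-!
We realize the bidual `(B ⊗_p B)**` of the projective tensor product of a Banach algebra `B`
with itself canonically as the dual of the Banach space `B →L[ℂ] B* ` of bounded bilinear
forms on `B` (the latter being isometrically isomorphic to `(B ⊗_p B)*`).  All the canonical
Banach `B`-bimodule actions are spelled out explicitly through this identification.
The multiplication of the Banach algebra `B` is encoded as a bounded bilinear map
`μ : B →L[ℂ] B →L[ℂ] B` (for a Banach algebra `A`, `μ = ContinuousLinearMap.mul ℂ A`).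
-/

noncomputable section

open ContinuousLinearMap NormedSpace

/-- The topological dual `E →L[𝕜] 𝕜` of a normed space, under its older Mathlib name
`NormedSpace.Dual` (removed since in favour of `StrongDual`, which is the same type). -/
def NormedSpace.Dual (𝕜 : Type*) [NontriviallyNormedField 𝕜] (E : Type*)
    [SeminormedAddCommGroup E] [NormedSpace 𝕜 E] : Type _ :=
  E →L[𝕜] 𝕜

instance (𝕜 : Type*) [NontriviallyNormedField 𝕜] (E : Type*) [NormedAddCommGroup E]
    [NormedSpace 𝕜 E] : NormedAddCommGroup (NormedSpace.Dual 𝕜 E) :=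
  inferInstanceAs (NormedAddCommGroup (E →L[𝕜] 𝕜))

instance (𝕜 : Type*) [NontriviallyNormedField 𝕜] (E : Type*) [NormedAddCommGroup E]
    [NormedSpace 𝕜 E] : NormedSpace 𝕜 (NormedSpace.Dual 𝕜 E) :=
  inferInstanceAs (NormedSpace 𝕜 (E →L[𝕜] 𝕜))

instance (𝕜 : Type*) [NontriviallyNormedField 𝕜] (E : Type*) [NormedAddCommGroup E]
    [NormedSpace 𝕜 E] : Module 𝕜 (NormedSpace.Dual 𝕜 E) :=
  inferInstanceAs (Module 𝕜 (E →L[𝕜] 𝕜))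

instance (𝕜 : Type*) [NontriviallyNormedField 𝕜] (E : Type*) [NormedAddCommGroup E]
    [NormedSpace 𝕜 E] : FunLike (NormedSpace.Dual 𝕜 E) E 𝕜 :=
  inferInstanceAs (FunLike (E →L[𝕜] 𝕜) E 𝕜)

instance (𝕜 : Type*) [NontriviallyNormedField 𝕜] (E : Type*) [NormedAddCommGroup E]
    [NormedSpace 𝕜 E] : ContinuousLinearMapClass (NormedSpace.Dual 𝕜 E) 𝕜 E 𝕜 :=
  inferInstanceAs (ContinuousLinearMapClass (E →L[𝕜] 𝕜) 𝕜 E 𝕜)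

/-- The space of bounded bilinear forms on `B`, canonically the dual of the projective
tensor product `B ⊗_p B`. -/
abbrev BilForm (B : Type*) [NormedAddCommGroup B] [NormedSpace ℂ B] : Type _ :=
  B →L[ℂ] Dual ℂ B

/-- The bidual of the projective tensor product `B ⊗_p B`, realized canonically as the dual of
the Banach space of bounded bilinear forms on `B`. -/
abbrev TensorBidual (B : Type*) [NormedAddCommGroup B] [NormedSpace ℂ B] : Type _ :=
  Dual ℂ (BilForm B)

/-- The bidual `B**` of a normed space `B`. -/
abbrev Bidual (B : Type*) [NormedAddCommGroup B] [NormedSpace ℂ B] : Type _ :=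
  Dual ℂ (Dual ℂ B)

variable {B : Type*} [NormedAddCommGroup B] [NormedSpace ℂ B]

/-- The left action of `a ∈ B` (with multiplication `μ`) on `(B ⊗_p B)**`:
`(a • T) β = T ((x, y) ↦ β (a x, y))`, the canonical bidual extension of the
`B`-bimodule action `a • (x ⊗ y) = (a x) ⊗ y` on `B ⊗_p B`. -/
def tensorLSmul (μ : B →L[ℂ] B →L[ℂ] B) (a : B) (T : TensorBidual B) : TensorBidual B :=
  T.comp ((compL ℂ B B (Dual ℂ B)).flip (μ a))

/-- The right action of `a ∈ B` on `(B ⊗_p B)**`: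
`(T • a) β = T ((x, y) ↦ β (x, y a))`, the canonical bidual extension of the
`B`-bimodule action `(x ⊗ y) • a = x ⊗ (y a)` on `B ⊗_p B`. -/
def tensorRSmul (μ : B →L[ℂ] B →L[ℂ] B) (T : TensorBidual B) (a : B) : TensorBidual B :=
  T.comp (compL ℂ B (Dual ℂ B) (Dual ℂ B) ((compL ℂ B B ℂ).flip (μ.flip a)))

/-- `π_B^* ψ`, the image of a functional `ψ ∈ B*` under the adjoint of the product
morphism `π_B : B ⊗_p B → B`; as a bilinear form it is `(x, y) ↦ ψ (x y)`.  Thus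
`π_B** T ψ = T (piDual μ ψ)` for `T ∈ (B ⊗_p B)**`. -/
def piDual (μ : B →L[ℂ] B →L[ℂ] B) (ψ : Dual ℂ B) : BilForm B :=
  (compL ℂ B B ℂ ψ).comp μ

/-- The left action of `a ∈ B` on the bidual `B**`: `(a • m) f = m (f ∘ (a * ·))`. -/
def bidualLSmul (μ : B →L[ℂ] B →L[ℂ] B) (a : B) (m : Bidual B) : Bidual B :=
  m.comp ((compL ℂ B B ℂ).flip (μ a))

/-- A Banach algebra `B` (with multiplication `μ` and a multiplicative functional `ψ`) is
*left `ψ`-biflat* if there is a bounded linear map `ρ : B → (B ⊗_p B)**` with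
`ρ (a b) = ψ (b) ρ (a) = a • ρ (b)` for all `a, b ∈ B`, and `ψ̃ ∘ π_B** ∘ ρ = ψ`
(note `(ψ̃ ∘ π_B**) T = T (piDual μ ψ)`). -/
def IsLeftBiflat (μ : B →L[ℂ] B →L[ℂ] B) (ψ : Dual ℂ B) : Prop :=
  ∃ ρ : B →L[ℂ] TensorBidual B,
    (∀ a b : B, ρ (μ a b) = ψ b • ρ a ∧ ρ (μ a b) = tensorLSmul μ a (ρ b)) ∧
    ∀ a : B, ρ a (piDual μ ψ) = ψ a

/-- A Banach algebra `B` is *left `ψ`-amenable* if there is `m ∈ B**` with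
`a • m = ψ (a) m` for all `a ∈ B` and `ψ̃ (m) = m (ψ) = 1`. -/
def IsLeftAmenable (μ : B →L[ℂ] B →L[ℂ] B) (ψ : Dual ℂ B) : Prop :=
  ∃ m : Bidual B, (∀ (a : B) (f : Dual ℂ B), m (f.comp (μ a)) = ψ a * m f) ∧ m ψ = 1

/-- Auxiliary map for the first Arens product: `arensAux μ f a = f · a`, where
`(f · a) (b) = f (a b)`. -/
def arensAux (μ : B →L[ℂ] B →L[ℂ] B) : Dual ℂ B →L[ℂ] (B →L[ℂ] Dual ℂ B) :=
  ((compL ℂ B (B →L[ℂ] B) (Dual ℂ B)).flip μ).comp (compL ℂ B B ℂ)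

/-- Second auxiliary map for the first Arens product: `arensAux₂ μ n f = n · f`, where
`(n · f) (a) = n (f · a)`. -/
def arensAux₂ (μ : B →L[ℂ] B →L[ℂ] B) : Bidual B →L[ℂ] (Dual ℂ B →L[ℂ] Dual ℂ B) :=
  ((compL ℂ (Dual ℂ B) (B →L[ℂ] Dual ℂ B) (Dual ℂ B)).flip (arensAux μ)).comp
    (compL ℂ B (Dual ℂ B) ℂ)

/-- The *first Arens product* on the bidual `B**` of a Banach algebra `B` with
multiplication `μ`: `(m □ n) (f) = m (n · f)`, where `(n · f) (a) = n (f · a)` and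
`(f · a) (b) = f (a b)`. -/
def arens (μ : B →L[ℂ] B →L[ℂ] B) : Bidual B →L[ℂ] Bidual B →L[ℂ] Bidual B :=
  ((compL ℂ (Bidual B) (Dual ℂ B →L[ℂ] Dual ℂ B) (Bidual B)).flip (arensAux₂ μ)).comp
    (compL ℂ (Dual ℂ B) (Dual ℂ B) ℂ)

/-- `ψ̃`, the canonical extension of a functional `ψ ∈ B*` to a functional on `B**`
(given by `ψ̃ (m) = m (ψ)`); if `ψ` is a character of `B`, this is the unique extension of
`ψ` to a character of `B**` with the first Arens product. -/
def charExt (ψ : Dual ℂ B) : Dual ℂ (Bidual B) :=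
  ContinuousLinearMap.apply ℂ ℂ ψ

variable {A : Type*} [NonUnitalNormedRing A] [NormedSpace ℂ A]
  [IsScalarTower ℂ A A] [SMulCommClass ℂ A A] [CompleteSpace A]

/-!
Restricting a left `φ̃`-biflat map of `A**` along `A → A**`, and extending bilinear forms from
`A` to `A**` in the Arens fashion, gives a left `φ`-biflat map of `A`. Conversely, for a left
`φ`-biflat `ρ` the approximate identity forces `b ↦ ρ b (π^* f)` to be a multiple of `φ`, so
`f ↦ ρ a₀ (π^* f)` with `φ a₀ = 1` is a left `φ`-mean of `A`. It is also a `φ̃`-mean of `A**`,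
and a `φ̃`-mean `m` makes `a ↦ φ̃ a • (m ⊗ m)` left `φ̃`-biflat.
-/

open Filter Topology

@[ext]
theorem NormedSpace.Dual.ext {E : Type*} [NormedAddCommGroup E] [NormedSpace ℂ E]
    {f g : Dual ℂ E} (h : ∀ x, f x = g x) : f = g :=
  ContinuousLinearMap.ext h

instance {E : Type*} [NormedAddCommGroup E] [NormedSpace ℂ E] : ContinuousSMul ℂ (Dual ℂ E) :=
  inferInstanceAs (ContinuousSMul ℂ (E →L[ℂ] ℂ))

section Multiplicative

variable {B : Type*} [NormedAddCommGroup B] [NormedSpace ℂ B]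
  (μ : B →L[ℂ] B →L[ℂ] B) {ψ : Dual ℂ B}

theorem comp_mul_eq_smul_of_map_mul (hψ : ∀ a b : B, ψ (μ a b) = ψ a * ψ b) (a : B) :
    ψ.comp (μ a) = ψ a • ψ := by
  ext b
  exact hψ a b

theorem arensAux₂_apply_of_map_mul (hψ : ∀ a b : B, ψ (μ a b) = ψ a * ψ b) (n : Bidual B) :
    arensAux₂ μ n ψ = n ψ • ψ := by
  ext a
  change n (ψ.comp (μ a)) = n ψ * ψ a
  rw [comp_mul_eq_smul_of_map_mul μ hψ, map_smul, smul_eq_mul, mul_comm]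

theorem charExt_arens (hψ : ∀ a b : B, ψ (μ a b) = ψ a * ψ b) (m n : Bidual B) :
    charExt ψ (arens μ m n) = charExt ψ m * charExt ψ n := by
  change m (arensAux₂ μ n ψ) = m ψ * n ψ
  rw [arensAux₂_apply_of_map_mul μ hψ, map_smul, smul_eq_mul, mul_comm]

end Multiplicative

namespace IsLeftAmenable

variable {B : Type*} [NormedAddCommGroup B] [NormedSpace ℂ B]
  {μ : B →L[ℂ] B →L[ℂ] B} {ψ : Dual ℂ B}

theorem isLeftBiflat (hψ : ∀ a b : B, ψ (μ a b) = ψ a * ψ b) (h : IsLeftAmenable μ ψ) :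
    IsLeftBiflat μ ψ := by
  obtain ⟨m, hm, hmψ⟩ := h
  -- `T = m ⊗ m`
  let T : TensorBidual B := m.comp (compL ℂ B (Dual ℂ B) ℂ m)
  refine ⟨ψ.smulRight T, fun a b => ⟨?_, ?_⟩, fun a => ?_⟩
  · change ψ (μ a b) • T = ψ b • ψ a • T
    rw [hψ, smul_smul, mul_comm]
  · ext β
    change ψ (μ a b) * m (m.comp β) = ψ b * m ((m.comp β).comp (μ a))
    rw [hψ, hm a (m.comp β)]
    ring
  · have hm_piDual : m.comp (piDual μ ψ) = ψ := by
      ext x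
      change m (ψ.comp (μ x)) = ψ x
      rw [hm, hmψ, mul_one]
    change ψ a * m (m.comp (piDual μ ψ)) = ψ a
    rw [hm_piDual, hmψ, mul_one]

theorem bidual (h : IsLeftAmenable μ ψ) : IsLeftAmenable (arens μ) (charExt ψ) := by
  obtain ⟨m, hm, hmψ⟩ := h
  have hm_arensAux₂ (f : Dual ℂ B) : arensAux₂ μ m f = m f • ψ := by
    ext a
    change m (f.comp (μ a)) = m f * ψ a
    rw [hm, mul_comm]
  have hm_right (n : Bidual B) : arens μ n m = n ψ • m := by
    ext f
    change n (arensAux₂ μ m f) = n ψ * m f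
    rw [hm_arensAux₂, map_smul, smul_eq_mul, mul_comm]
  refine ⟨inclusionInDoubleDual ℂ (Bidual B) m, fun n F => ?_, hmψ⟩
  change F (arens μ n m) = n ψ * F m
  rw [hm_right, map_smul, smul_eq_mul]

end IsLeftAmenable

theorem apply_eq_mul_apply_of_tendsto {M R : Type*} [TopologicalSpace M] [Monoid R]
    [TopologicalSpace R] [ContinuousMul R] [T2Space R] {μ : M → M → M} {φ g : M → R}
    (hg : Continuous g) (hg_mul : ∀ a b, g (μ a b) = φ b * g a) {l : Filter M} [l.NeBot]
    (hl : ∀ a, Tendsto (fun e => μ e a) l (𝓝 a)) {a₀ : M} (ha₀ : φ a₀ = 1) (a : M) :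
    g a = φ a * g a₀ := by
  have h_eq : (fun e => g (μ e a)) = fun e => φ a * g (μ e a₀) := by
    funext e
    rw [hg_mul, hg_mul, ha₀, one_mul]
  have h_lim : Tendsto (fun e => g (μ e a)) l (𝓝 (φ a * g a₀)) :=
    h_eq ▸ ((hg.tendsto a₀).comp (hl a₀)).const_mul (φ a)
  exact tendsto_nhds_unique ((hg.tendsto a).comp (hl a)) h_lim

namespace IsLeftBiflat

variable {B : Type*} [NormedAddCommGroup B] [NormedSpace ℂ B]
  {μ : B →L[ℂ] B →L[ℂ] B} {ψ : Dual ℂ B}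

theorem of_bidual (hψ : ∀ a b : B, ψ (μ a b) = ψ a * ψ b)
    (h : IsLeftBiflat (arens μ) (charExt ψ)) : IsLeftBiflat μ ψ := by
  obtain ⟨ρ, hρ, hρψ⟩ := h
  let ι : B →L[ℂ] Bidual B := inclusionInDoubleDual ℂ B
  -- `extend β (n, m) = n (m ∘ β)`
  let extend : BilForm B →L[ℂ] BilForm (Bidual B) :=
    (compL ℂ (Bidual B) (Dual ℂ B) ℂ).flip.comp (compL ℂ B (Dual ℂ B) ℂ).flip
  have hι (a b : B) : ι (μ a b) = arens μ (ι a) (ι b) := rfl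
  have h_extend : extend (piDual μ ψ) = piDual (arens μ) (charExt ψ) := by
    ext n m
    change n (m.comp (piDual μ ψ)) = n (arensAux₂ μ m ψ)
    rw [arensAux₂_apply_of_map_mul μ hψ]
    congr 1
    ext x
    change m (ψ.comp (μ x)) = m ψ * ψ x
    rw [comp_mul_eq_smul_of_map_mul μ hψ, map_smul, smul_eq_mul, mul_comm]
  refine ⟨(compL ℂ (BilForm B) (BilForm (Bidual B)) ℂ).flip extend ∘L ρ ∘L ι,
    fun a b => ⟨?_, ?_⟩, fun a => ?_⟩
  · ext β
    change ρ (ι (μ a b)) (extend β) = ψ b * ρ (ι a) (extend β)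
    rw [hι, (hρ (ι a) (ι b)).1]
    rfl
  · ext β
    change ρ (ι (μ a b)) (extend β) = ρ (ι b) (extend (β.comp (μ a)))
    rw [hι, (hρ (ι a) (ι b)).2]
    rfl
  · change ρ (ι a) (extend (piDual μ ψ)) = ψ a
    rw [h_extend, hρψ]
    rfl

theorem isLeftAmenable (hμ : ∀ a b c : B, μ a (μ b c) = μ (μ a b) c)
    (hψ : ψ ≠ 0) {l : Filter B} [l.NeBot] (hl : ∀ a : B, Tendsto (fun e => μ e a) l (𝓝 a))
    (h : IsLeftBiflat μ ψ) : IsLeftAmenable μ ψ := by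
  obtain ⟨ρ, hρ, hρψ⟩ := h
  obtain ⟨c, hc⟩ := DFunLike.ne_iff.mp hψ
  let a₀ : B := (ψ c)⁻¹ • c
  have ha₀ : ψ a₀ = 1 := by
    rw [map_smul, smul_eq_mul, inv_mul_cancel₀ hc]
  have hρ_eq (f : Dual ℂ B) (a : B) : ρ a (piDual μ f) = ψ a * ρ a₀ (piDual μ f) :=
    apply_eq_mul_apply_of_tendsto (g := fun b => ρ b (piDual μ f))
      ((apply ℂ ℂ (piDual μ f)).comp ρ).continuous
      (fun a b => by rw [(hρ a b).1]; rfl) hl ha₀ a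
  refine ⟨(ρ a₀).comp (arensAux μ), fun a f => ?_, (hρψ a₀).trans ha₀⟩
  have h_assoc : arensAux μ (f.comp (μ a)) = (piDual μ f).comp (μ a) := by
    ext x y
    exact congrArg f (hμ a x y)
  calc ρ a₀ (arensAux μ (f.comp (μ a)))
      = tensorLSmul μ a (ρ a₀) (piDual μ f) := congrArg (ρ a₀) h_assoc
    _ = ρ a (piDual μ f) := by rw [← (hρ a a₀).2, (hρ a a₀).1, ha₀, one_smul]
    _ = ψ a * ρ a₀ (piDual μ f) := hρ_eq f a

end IsLeftBiflat

/-- Theorem 2.2: if a Banach algebra `A` has a left approximate identity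
(a net `(e_α)` with `e_α a → a` in norm for every `a ∈ A`, encoded by a filter), then the
bidual `A**`, equipped with the first Arens product, is left `φ̃`-biflat if and only if `A`
is left `φ`-biflat. -/
theorem bidual_left_phi_biflat_iff_left_phi_biflat
    (φ : A →L[ℂ] ℂ) (hφ_ne : φ ≠ 0)
    (hφ_mul : ∀ a b : A, φ (a * b) = φ a * φ b)
    (hlai : ∃ l : Filter A, l.NeBot ∧ ∀ a : A, Filter.Tendsto (fun e => e * a) l (nhds a)) :
    IsLeftBiflat (B := Bidual A) (arens (ContinuousLinearMap.mul ℂ A)) (charExt φ) ↔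
      IsLeftBiflat (ContinuousLinearMap.mul ℂ A) φ := by
  obtain ⟨l, hl, hlim⟩ := hlai
  exact ⟨IsLeftBiflat.of_bidual hφ_mul, fun h =>
    ((h.isLeftAmenable (fun a b c => (mul_assoc a b c).symm) hφ_ne hlim).bidual).isLeftBiflat
      (charExt_arens _ hφ_mul)⟩
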